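/- arXiv:1912.09451 — 4 statements merged into one kernel-verified Lean document; each statement's English description precedes it below -/
import Mathlib

section
/- Let P be a symmetric positive definite n×n matrix with μI ⪯ P ⪯ νI for 0 < μ ≤ ν, and let M be an n×n matrix such that P ⪰ MᵀPM + μI. Set κ̄ = √(ν/μ) and L = P^{1/2} M P^{-1/2}. Then ‖L‖ ≤ √(1 - 1/κ̄²) ≤ 1 - 1/(2κ̄²), and ‖P^{1/2}‖·‖P^{-1/2}‖ ≤ κ̄. -/
/-!
Write `S = P^{1/2}` and `L = S M S⁻¹`. Conjugating by `S⁻¹` turns `P` into `I`: the Lyapunov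
inequality becomes `LᵀL + μ S⁻² ⪯ I` and `P ⪯ ν I` becomes `I ⪯ ν S⁻²`, so `LᵀL ⪯ (1 - μ/ν) I`.
Likewise `SᵀS = P ⪯ ν I` and `S⁻ᵀS⁻¹ ⪯ μ⁻¹ I`. Finally `AᵀA ⪯ c I` says `‖A x‖² ≤ c ‖x‖²` for
all `x`, i.e. `‖A‖ ≤ √c`.
-/

open Matrix
open scoped Matrix.Norms.L2Operator

open scoped ComplexOrder in
/-- The positive semidefinite square root of a positive semidefinite matrix
(the definition removed from Mathlib, restated with its old value). -/
noncomputable def Matrix.PosSemidef.sqrt {n : Type*} [Fintype n] [DecidableEq n] {𝕜 : Type*}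
    [RCLike 𝕜] {A : Matrix n n 𝕜} (hA : A.PosSemidef) : Matrix n n 𝕜 :=
  (hA.1.eigenvectorUnitary : Matrix n n 𝕜) * diagonal (((↑) : ℝ → 𝕜) ∘ (√·) ∘ hA.1.eigenvalues) *
    (star hA.1.eigenvectorUnitary : Matrix n n 𝕜)

open scoped MatrixOrder ComplexOrder

theorem Real.sqrt_one_sub_le_one_sub_half {x : ℝ} (hx : x ≤ 2) : √(1 - x) ≤ 1 - x / 2 := by
  rw [Real.sqrt_le_left (by linarith)]
  nlinarith [sq_nonneg x]

theorem IsSelfAdjoint.star_mul_mul_self_mul_eq_one {A : Type*} [Ring A] [StarRing A] {s q : A}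
    (hs : IsSelfAdjoint s) (hsq : s * q = 1) : star q * (s * s) * q = 1 := by
  calc star q * (s * s) * q = star (s * q) * (s * q) := by
        rw [star_mul, hs.star_eq]; noncomm_ring
    _ = 1 := by rw [hsq, star_one, one_mul]

section StarOrderedAlgebra

variable {A : Type*} [Ring A] [PartialOrder A] [StarRing A] [StarOrderedRing A] [Algebra ℝ A]
  [StarModule ℝ A] {s q : A} (hs : IsSelfAdjoint s) (hsq : s * q = 1)
include hs hsq

omit [StarModule ℝ A] in
theorem smul_star_mul_self_le_one_of_smul_one_le {c : ℝ} (h : c • 1 ≤ s * s) :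
    c • (star q * q) ≤ 1 := by
  simpa only [mul_smul_one, smul_mul_assoc, hs.star_mul_mul_self_mul_eq_one hsq]
    using star_left_conjugate_le_conjugate h q

omit [StarModule ℝ A] in
theorem one_le_smul_star_mul_self_of_le_smul_one {c : ℝ} (h : s * s ≤ c • 1) :
    1 ≤ c • (star q * q) := by
  simpa only [mul_smul_one, smul_mul_assoc, hs.star_mul_mul_self_mul_eq_one hsq]
    using star_left_conjugate_le_conjugate h q

theorem star_mul_self_le_inv_smul_one_of_smul_one_le {μ : ℝ} (hμ : 0 < μ) (h : μ • 1 ≤ s * s) :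
    star q * q ≤ μ⁻¹ • 1 := by
  simpa only [smul_smul, inv_mul_cancel₀ hμ.ne', one_smul]
    using smul_le_smul_of_nonneg_left (smul_star_mul_self_le_one_of_smul_one_le hs hsq h)
      (inv_nonneg.mpr hμ.le)

theorem star_mul_self_le_of_lyapunov (m : A) {μ ν : ℝ} (hμ : 0 ≤ μ) (hν : 0 < ν)
    (hhigh : s * s ≤ ν • 1) (hlyap : star m * (s * s) * m + μ • 1 ≤ s * s) :
    star (s * m * q) * (s * m * q) ≤ (1 - μ / ν) • 1 := by
  have hconj : star (s * m * q) * (s * m * q) + μ • (star q * q) ≤ 1 := by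
    have hL : star (s * m * q) * (s * m * q) = star q * (star m * (s * s) * m) * q := by
      rw [star_mul, star_mul, hs.star_eq]; noncomm_ring
    simpa only [hs.star_mul_mul_self_mul_eq_one hsq, mul_add, add_mul, mul_smul_one,
      smul_mul_assoc, hL] using star_left_conjugate_le_conjugate hlyap q
  have hscale : (μ / ν) • (1 : A) ≤ μ • (star q * q) := by
    simpa only [smul_smul, div_mul_cancel₀ μ hν.ne'] using
      smul_le_smul_of_nonneg_left (one_le_smul_star_mul_self_of_le_smul_one hs hsq hhigh)
        (div_nonneg hμ hν.le)
  rw [sub_smul, one_smul]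
  calc _ ≤ 1 - μ • (star q * q) := le_sub_iff_add_le.mpr hconj
    _ ≤ 1 - (μ / ν) • 1 := sub_le_sub_left hscale 1

end StarOrderedAlgebra

section Matrix

variable {m n 𝕜 : Type*} [Fintype m] [Fintype n] [DecidableEq n] [RCLike 𝕜]

theorem Matrix.PosSemidef.sqrt_eq_cfcSqrt {A : Matrix n n 𝕜} (hA : A.PosSemidef) :
    hA.sqrt = CFC.sqrt A := by
  rw [CFC.sqrt_eq_real_sqrt A hA.nonneg, cfcₙ_eq_cfc, hA.1.cfc_eq, IsHermitian.cfc,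
    Unitary.conjStarAlgAut_apply, PosSemidef.sqrt]

omit [DecidableEq n] in
theorem EuclideanSpace.norm_sq_eq_re_star_dotProduct (x : EuclideanSpace 𝕜 n) :
    ‖x‖ ^ 2 = RCLike.re (star (WithLp.ofLp x) ⬝ᵥ WithLp.ofLp x) := by
  rw [@norm_sq_eq_re_inner 𝕜, EuclideanSpace.inner_eq_star_dotProduct, dotProduct_comm]

theorem Matrix.l2_opNorm_le_sqrt_of_conjTranspose_mul_self_le (A : Matrix m n 𝕜) {c : ℝ}
    (h : Aᴴ * A ≤ c • 1) : ‖A‖ ≤ √c := by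
  rw [l2_opNorm_def]
  refine ContinuousLinearMap.opNorm_le_bound _ (Real.sqrt_nonneg c) fun x => ?_
  have hx : ‖(toEuclideanLin.trans LinearMap.toContinuousLinearMap A) x‖ ^ 2 ≤ c * ‖x‖ ^ 2 := by
    have := (Matrix.le_iff.mp h).re_dotProduct_nonneg (WithLp.ofLp x)
    rw [sub_mulVec, dotProduct_sub, smul_mulVec, one_mulVec, ← mulVec_mulVec, dotProduct_mulVec,
      vecMul_conjTranspose, star_star, map_sub, dotProduct_smul, RCLike.smul_re] at this
    rw [EuclideanSpace.norm_sq_eq_re_star_dotProduct, EuclideanSpace.norm_sq_eq_re_star_dotProduct]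
    exact sub_nonneg.mp this
  calc _ ≤ √(c * ‖x‖ ^ 2) := Real.le_sqrt_of_sq_le hx
    _ = √c * ‖x‖ := by rw [Real.sqrt_mul' c (sq_nonneg _), Real.sqrt_sq (norm_nonneg x)]

end Matrix

theorem strong_stability_from_lyapunov {n : ℕ}
    (P M : Matrix (Fin n) (Fin n) ℝ) (μ ν : ℝ)
    (hμ : 0 < μ) (hμν : μ ≤ ν) (hP : P.PosDef)
    (hlow : (P - μ • (1 : Matrix (Fin n) (Fin n) ℝ)).PosSemidef)
    (hhigh : ((ν • (1 : Matrix (Fin n) (Fin n) ℝ)) - P).PosSemidef)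
    (hlyap : (P - (Mᵀ * P * M + μ • (1 : Matrix (Fin n) (Fin n) ℝ))).PosSemidef) :
    ‖hP.posSemidef.sqrt * M * (hP.posSemidef.sqrt)⁻¹‖ ≤ Real.sqrt (1 - 1 / Real.sqrt (ν / μ) ^ 2) ∧
    Real.sqrt (1 - 1 / Real.sqrt (ν / μ) ^ 2) ≤ 1 - 1 / (2 * Real.sqrt (ν / μ) ^ 2) ∧
    ‖hP.posSemidef.sqrt‖ * ‖(hP.posSemidef.sqrt)⁻¹‖ ≤ Real.sqrt (ν / μ) := by
  have hν : 0 < ν := hμ.trans_le hμν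
  have hκ : √(ν / μ) ^ 2 = ν / μ := Real.sq_sqrt (by positivity)
  have hhalf : 1 / (2 * (ν / μ)) = μ / ν / 2 := by field_simp
  rw [hP.posSemidef.sqrt_eq_cfcSqrt, hκ, hhalf, one_div_div]
  set S := CFC.sqrt P
  have hS : IsSelfAdjoint S := .of_nonneg (CFC.sqrt_nonneg P)
  have hSS : S * S = P := CFC.sqrt_mul_sqrt_self P hP.posSemidef.nonneg
  have hSinv : S * S⁻¹ = 1 :=
    mul_nonsing_inv S ((isUnit_iff_isUnit_det S).mp hP.isStrictlyPositive.sqrt.isUnit)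
  have hlow' : μ • 1 ≤ S * S := hSS ▸ hlow
  have hhigh' : S * S ≤ ν • 1 := hSS ▸ hhigh
  refine ⟨?_, Real.sqrt_one_sub_le_one_sub_half (by linarith [(div_le_one hν).mpr hμν]), ?_⟩
  · refine l2_opNorm_le_sqrt_of_conjTranspose_mul_self_le _ ?_
    refine star_mul_self_le_of_lyapunov hS hSinv M hμ.le hν hhigh' ?_
    rwa [hSS, star_eq_conjTranspose, conjTranspose_eq_transpose_of_trivial]
  · calc ‖S‖ * ‖S⁻¹‖ ≤ √ν * √μ⁻¹ := by
          gcongr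
          · refine l2_opNorm_le_sqrt_of_conjTranspose_mul_self_le S ?_
            rwa [← star_eq_conjTranspose, hS.star_eq]
          · exact l2_opNorm_le_sqrt_of_conjTranspose_mul_self_le _
              (star_mul_self_le_inv_smul_one_of_smul_one_le hS hSinv hμ hlow')
      _ = √(ν / μ) := by rw [← Real.sqrt_mul hν.le, div_eq_mul_inv]
end

section
/- Let M be a (κ,γ)-strongly stable n×n matrix (M = HLH⁻¹, ‖L‖ ≤ 1-γ, ‖H‖‖H⁻¹‖ ≤ κ, 0 < γ ≤ 1, κ ≥ 1), let W, X̂ be symmetric matrices with X̂ = M X̂ Mᵀ + W, and let the sequence X_{t+1} = M X_t Mᵀ + W start from symmetric X_1. Then for all t ≥ 1, ‖X_{t+1} - X̂‖ ≤ κ² (1-γ)^{2t} ‖X_1 - X̂‖ ≤ κ² e^{-2γt} ‖X_1 - X̂‖. -/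
/-!
The error `X t - X̂` obeys the homogeneous recursion `E ↦ M E Mᵀ`, so `X (t + 1) - X̂ = Mᵗ (X 1 - X̂) (Mᵗ)ᵀ`.
Writing `M = H L H⁻¹` gives `Mᵗ = H Lᵗ H⁻¹`, hence `‖Mᵗ‖ ≤ κ (1 - γ)ᵗ`, and the bound follows from
submultiplicativity of the operator norm and `1 - γ ≤ e^{-γ}`.
Only submultiplicativity and `‖star a‖ = ‖a‖` are used, so the argument runs in any normed star ring;
for real matrices `star` is the transpose.
-/

open Matrix
open scoped Matrix.Norms.L2Operator

section Recursion

variable {R : Type*} [Ring R] [StarMul R]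

theorem lyapunov_sub_lyapunov (m x y w : R) :
    (m * x * star m + w) - (m * y * star m + w) = m * (x - y) * star m := by
  noncomm_ring

theorem sub_fixedPoint_eq_pow_mul_mul_star_pow {m w xhat : R} {x : ℕ → R}
    (hfix : xhat = m * xhat * star m + w) (hrec : ∀ t ≥ 1, x (t + 1) = m * x t * star m + w) :
    ∀ t ≥ 1, x (t + 1) - xhat = m ^ t * (x 1 - xhat) * star (m ^ t) := by
  have hstep : ∀ t ≥ 1, x (t + 1) - xhat = m * (x t - xhat) * star m := fun t ht => by
    rw [hrec t ht, ← lyapunov_sub_lyapunov, ← hfix]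
  intro t ht
  induction t, ht using Nat.le_induction with
  | base => rw [hstep 1 le_rfl, pow_one]
  | succ t ht ih =>
    rw [hstep (t + 1) (by omega), ih, pow_succ', star_mul, star_pow]
    simp only [mul_assoc]

end Recursion

section Normed

variable {R : Type*} [NormedRing R]

theorem norm_units_conj_pow_le (u : Rˣ) (l : R) {t : ℕ} (ht : t ≠ 0) :
    ‖((u : R) * l * ↑u⁻¹) ^ t‖ ≤ ‖(u : R)‖ * ‖(↑u⁻¹ : R)‖ * ‖l‖ ^ t := by
  rw [Units.conj_pow]
  calc ‖(u : R) * l ^ t * ↑u⁻¹‖ ≤ ‖(u : R)‖ * ‖l ^ t‖ * ‖(↑u⁻¹ : R)‖ := norm_mul₃_le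
    _ ≤ ‖(u : R)‖ * ‖l‖ ^ t * ‖(↑u⁻¹ : R)‖ := by
      gcongr
      exact norm_pow_le' l (Nat.pos_of_ne_zero ht)
    _ = ‖(u : R)‖ * ‖(↑u⁻¹ : R)‖ * ‖l‖ ^ t := by ring

variable [StarRing R] [NormedStarGroup R]

theorem norm_mul_mul_star_le (a b : R) : ‖a * b * star a‖ ≤ ‖a‖ ^ 2 * ‖b‖ := by
  calc ‖a * b * star a‖ ≤ ‖a‖ * ‖b‖ * ‖star a‖ := norm_mul₃_le
    _ = ‖a‖ ^ 2 * ‖b‖ := by rw [norm_star]; ring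

theorem norm_sub_fixedPoint_le {u : Rˣ} {l m w xhat : R} {x : ℕ → R} {κ ρ : ℝ}
    (hm : m = u * l * ↑u⁻¹) (hl : ‖l‖ ≤ ρ) (hu : ‖(u : R)‖ * ‖(↑u⁻¹ : R)‖ ≤ κ)
    (hfix : xhat = m * xhat * star m + w) (hrec : ∀ t ≥ 1, x (t + 1) = m * x t * star m + w)
    {t : ℕ} (ht : 1 ≤ t) : ‖x (t + 1) - xhat‖ ≤ κ ^ 2 * ρ ^ (2 * t) * ‖x 1 - xhat‖ := by
  have hpow : ‖m ^ t‖ ≤ κ * ρ ^ t := by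
    rw [hm]
    refine (norm_units_conj_pow_le u l (by omega)).trans ?_
    exact mul_le_mul hu (pow_le_pow_left₀ (norm_nonneg _) hl t) (by positivity)
      ((by positivity : (0 : ℝ) ≤ _).trans hu)
  calc ‖x (t + 1) - xhat‖ = ‖m ^ t * (x 1 - xhat) * star (m ^ t)‖ := by
        rw [sub_fixedPoint_eq_pow_mul_mul_star_pow hfix hrec t ht]
    _ ≤ ‖m ^ t‖ ^ 2 * ‖x 1 - xhat‖ := norm_mul_mul_star_le _ _
    _ ≤ (κ * ρ ^ t) ^ 2 * ‖x 1 - xhat‖ := by gcongr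
    _ = κ ^ 2 * ρ ^ (2 * t) * ‖x 1 - xhat‖ := by ring

end Normed

theorem one_sub_pow_le_exp_neg_mul {γ : ℝ} (hγ : γ ≤ 1) (k : ℕ) :
    (1 - γ) ^ k ≤ Real.exp (-γ * k) := by
  calc (1 - γ) ^ k ≤ Real.exp (-γ) ^ k :=
        pow_le_pow_left₀ (by linarith) (Real.one_sub_le_exp_neg γ) k
    _ = Real.exp (-γ * k) := by rw [← Real.exp_nat_mul]; ring_nf

theorem covariance_convergence_general {n : ℕ}
    (M H L W Xhat : Matrix (Fin n) (Fin n) ℝ) (X : ℕ → Matrix (Fin n) (Fin n) ℝ)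
    (κ γ : ℝ) (hγ1 : γ ≤ 1)
    (hH : IsUnit H) (hfact : M = H * L * H⁻¹) (hL : ‖L‖ ≤ 1 - γ) (hHn : ‖H‖ * ‖H⁻¹‖ ≤ κ)
    (hfix : Xhat = M * Xhat * Mᵀ + W)
    (hrec : ∀ t ≥ 1, X (t + 1) = M * X t * Mᵀ + W) :
    ∀ t ≥ 1, ‖X (t + 1) - Xhat‖ ≤ κ ^ 2 * (1 - γ) ^ (2 * t) * ‖X 1 - Xhat‖ ∧
      κ ^ 2 * (1 - γ) ^ (2 * t) * ‖X 1 - Xhat‖ ≤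
        κ ^ 2 * Real.exp (-2 * γ * t) * ‖X 1 - Xhat‖ := by
  obtain ⟨u, rfl⟩ := hH
  have hstar : Mᵀ = star M := by rw [star_eq_conjTranspose, conjTranspose_eq_transpose_of_trivial]
  rw [hstar] at hfix hrec
  rw [← coe_units_inv] at hfact hHn
  intro t ht
  refine ⟨norm_sub_fixedPoint_le hfact hL hHn hfix hrec ht, ?_⟩
  have hexp : (1 - γ) ^ (2 * t) ≤ Real.exp (-2 * γ * t) := by
    convert one_sub_pow_le_exp_neg_mul hγ1 (2 * t) using 2
    push_cast
    ring
  gcongr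

theorem covariance_convergence {n : ℕ}
    (M H L W Xhat : Matrix (Fin n) (Fin n) ℝ) (X : ℕ → Matrix (Fin n) (Fin n) ℝ)
    (κ γ : ℝ) (hκ : 1 ≤ κ) (hγ0 : 0 < γ) (hγ1 : γ ≤ 1)
    (hH : IsUnit H) (hfact : M = H * L * H⁻¹) (hL : ‖L‖ ≤ 1 - γ) (hHn : ‖H‖ * ‖H⁻¹‖ ≤ κ)
    (hW : W.IsSymm) (hXhat : Xhat.IsSymm) (hfix : Xhat = M * Xhat * Mᵀ + W)
    (hX1 : (X 1).IsSymm) (hrec : ∀ t ≥ 1, X (t + 1) = M * X t * Mᵀ + W) :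
    ∀ t ≥ 1, ‖X (t + 1) - Xhat‖ ≤ κ ^ 2 * (1 - γ) ^ (2 * t) * ‖X 1 - Xhat‖ ∧
      κ ^ 2 * (1 - γ) ^ (2 * t) * ‖X 1 - Xhat‖ ≤
        κ ^ 2 * Real.exp (-2 * γ * t) * ‖X 1 - Xhat‖ :=
  covariance_convergence_general M H L W Xhat X κ γ hγ1 hH hfact hL hHn hfix hrec
end

section
/- Given the same setup, if additionally K_{t-1} satisfies (BᵀP_{t-1}B + R̄_{t-1}) K_t = Bᵀ P_{t-1} A, then K_{t+1} - K_t = (BᵀP_tB + R̄_t)⁻¹ [ Bᵀ(P_t - P_{t-1})(A - BK_t) + (R̄_{t-1} - R̄_t)K_t ]. -/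
open Matrix

theorem gain_difference_identity {n m : ℕ}
    (A : Matrix (Fin n) (Fin n) ℝ) (B : Matrix (Fin n) (Fin m) ℝ)
    (Kt Kt1 : Matrix (Fin m) (Fin n) ℝ)
    (Pm P : Matrix (Fin n) (Fin n) ℝ) (Rm R : Matrix (Fin m) (Fin m) ℝ)
    (hPm : Pm.IsSymm) (hP : P.IsSymm) (hRm : Rm.PosDef) (hR : R.PosDef)
    (hU : IsUnit (Bᵀ * P * B + R)) (hUm : IsUnit (Bᵀ * Pm * B + Rm))
    (hKt1 : Kt1 = (Bᵀ * P * B + R)⁻¹ * (Bᵀ * P * A))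
    (hKt : Kt = (Bᵀ * Pm * B + Rm)⁻¹ * (Bᵀ * Pm * A))
    (hKteq : (Bᵀ * Pm * B + Rm) * Kt = Bᵀ * Pm * A) :
    Kt1 - Kt = (Bᵀ * P * B + R)⁻¹ *
      (Bᵀ * (P - Pm) * (A - B * Kt) + (Rm - R) * Kt) := by
  have hinv : (Bᵀ * P * B + R)⁻¹ * (Bᵀ * P * B + R) = 1 :=
    Matrix.nonsing_inv_mul _ ((Matrix.isUnit_iff_isUnit_det _).mp hU)
  have key : Bᵀ * (P - Pm) * (A - B * Kt) + (Rm - R) * Kt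
      = Bᵀ * P * A - (Bᵀ * P * B + R) * Kt := by
    have expand : Bᵀ * (P - Pm) * (A - B * Kt) + (Rm - R) * Kt
        = (Bᵀ * P * A - (Bᵀ * P * B + R) * Kt)
          - (Bᵀ * Pm * A - (Bᵀ * Pm * B + Rm) * Kt) := by
      simp only [Matrix.sub_mul, Matrix.mul_sub, Matrix.add_mul, Matrix.mul_assoc]
      abel
    rw [expand, hKteq, sub_self, sub_zero]
  have hcanc : (Bᵀ * P * B + R)⁻¹ * ((Bᵀ * P * B + R) * Kt) = Kt := by
    rw [← Matrix.mul_assoc, hinv, Matrix.one_mul]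
  rw [key, Matrix.mul_sub, hKt1, hcanc]
end

section
/- (Scalar Riccati boundedness, stationary version) Let A, B ∈ ℝ with B ≠ 0, and Q, R > 0. For stable K (i.e., |A - BK| < 1), define P(K) = (Q + K²R)/(1 - (A-BK)²). Then P(K) is minimized over stable K at K̂ = (-R + A²R - B²Q + √((R - A²R + B²Q)² + 4A²B²RQ))/(2ABR) (when A ≠ 0), and the minimum value is P̃ = (A²R - R + QB² + √((R - A²R - QB²)² + 4B²QR))/(2B²). -/
/-!
A positive solution `P` of the scalar algebraic Riccati equation completes the square:
`(R + B²P) (Q + K²R - P (1 - (A - BK)²)) = ((R + B²P) K - ABP)²`.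
Hence `P (1 - (A - BK)²) ≤ Q + K²R` for every `K`, so `P ≤ P(K)` for every stable `K`,
with equality at the gain `K = ABP / (R + B²P)`. At that gain `P (1 - (A - BK)²) = Q + K²R > 0`,
which forces stability. `P̃` is the positive root of the Riccati equation and `K̂` its gain.
-/

open Real

section QuadraticRoot

variable {a b c : ℝ}

theorem quadratic_pos_root_isRoot (ha : a ≠ 0) (hd : 0 ≤ b ^ 2 + 4 * a * c) :
    a * ((-b + √(b ^ 2 + 4 * a * c)) / (2 * a)) ^ 2
      + b * ((-b + √(b ^ 2 + 4 * a * c)) / (2 * a)) - c = 0 := by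
  have hdiscrim : discrim a b (-c) = √(b ^ 2 + 4 * a * c) * √(b ^ 2 + 4 * a * c) := by
    rw [mul_self_sqrt hd, discrim]
    ring
  linear_combination (quadratic_eq_zero_iff ha hdiscrim _).2 (Or.inl rfl)

theorem quadratic_pos_root_pos (ha : 0 < a) (hc : 0 < c) :
    0 < (-b + √(b ^ 2 + 4 * a * c)) / (2 * a) := by
  have hb : b < √(b ^ 2 + 4 * a * c) :=
    calc b ≤ |b| := le_abs_self b
      _ = √(b ^ 2) := (sqrt_sq_eq_abs b).symm
      _ < √(b ^ 2 + 4 * a * c) := sqrt_lt_sqrt (sq_nonneg b) (by nlinarith)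
  exact div_pos (by linarith) (by linarith)

end QuadraticRoot

section Riccati

variable (A B Q R : ℝ)

/-- The scalar algebraic Riccati equation `P = A²P + Q - A²B²P² / (R + B²P)`, cleared of
denominators. -/
def IsRiccatiSolution (P : ℝ) : Prop :=
  B ^ 2 * P ^ 2 + (R - A ^ 2 * R - Q * B ^ 2) * P - Q * R = 0

noncomputable def riccatiGain (P : ℝ) : ℝ :=
  A * B * P / (R + B ^ 2 * P)

variable {A B Q R} {P : ℝ}

theorem IsRiccatiSolution.completed_square (hP : IsRiccatiSolution A B Q R P) (K : ℝ) :
    (R + B ^ 2 * P) * (Q + K ^ 2 * R - P * (1 - (A - B * K) ^ 2))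
      = ((R + B ^ 2 * P) * K - A * B * P) ^ 2 := by
  unfold IsRiccatiSolution at hP
  linear_combination (-1 : ℝ) * hP

theorem IsRiccatiSolution.mul_one_sub_sq_le (hP : IsRiccatiSolution A B Q R P) (hR : 0 < R)
    (hP0 : 0 ≤ P) (K : ℝ) : P * (1 - (A - B * K) ^ 2) ≤ Q + K ^ 2 * R := by
  have hD : 0 < R + B ^ 2 * P := by positivity
  have := (mul_nonneg_iff_of_pos_left hD).1 (hP.completed_square K ▸ sq_nonneg _)
  linarith

theorem IsRiccatiSolution.le_div_one_sub_sq (hP : IsRiccatiSolution A B Q R P) (hR : 0 < R)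
    (hP0 : 0 ≤ P) {K : ℝ} (hK : |A - B * K| < 1) :
    P ≤ (Q + K ^ 2 * R) / (1 - (A - B * K) ^ 2) := by
  have : (A - B * K) ^ 2 < 1 := (sq_lt_one_iff_abs_lt_one _).2 hK
  rw [le_div_iff₀ (by linarith)]
  exact hP.mul_one_sub_sq_le hR hP0 K

theorem IsRiccatiSolution.mul_one_sub_sq_gain_eq (hP : IsRiccatiSolution A B Q R P)
    (hR : 0 < R) (hP0 : 0 ≤ P) :
    P * (1 - (A - B * riccatiGain A B R P) ^ 2) = Q + riccatiGain A B R P ^ 2 * R := by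
  have hD : R + B ^ 2 * P ≠ 0 := by positivity
  have hgain : (R + B ^ 2 * P) * riccatiGain A B R P = A * B * P := by
    rw [riccatiGain]
    field_simp
  have hsq := hP.completed_square (riccatiGain A B R P)
  rw [hgain, sub_self, zero_pow two_ne_zero] at hsq
  linarith [(mul_eq_zero.1 hsq).resolve_left hD]

theorem IsRiccatiSolution.abs_sub_mul_gain_lt_one (hP : IsRiccatiSolution A B Q R P)
    (hQ : 0 < Q) (hR : 0 < R) (hP0 : 0 < P) : |A - B * riccatiGain A B R P| < 1 := by
  have h := hP.mul_one_sub_sq_gain_eq hR hP0.le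
  have : 0 < P * (1 - (A - B * riccatiGain A B R P) ^ 2) := by rw [h]; positivity
  exact (sq_lt_one_iff_abs_lt_one _).1 (by linarith [pos_of_mul_pos_right this hP0.le])

theorem IsRiccatiSolution.div_one_sub_sq_gain_eq (hP : IsRiccatiSolution A B Q R P)
    (hQ : 0 < Q) (hR : 0 < R) (hP0 : 0 < P) :
    (Q + riccatiGain A B R P ^ 2 * R) / (1 - (A - B * riccatiGain A B R P) ^ 2) = P := by
  have : (A - B * riccatiGain A B R P) ^ 2 < 1 :=
    (sq_lt_one_iff_abs_lt_one _).2 (hP.abs_sub_mul_gain_lt_one hQ hR hP0)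
  rw [div_eq_iff (by linarith), hP.mul_one_sub_sq_gain_eq hR hP0.le]

theorem IsRiccatiSolution.riccatiGain_eq (hP : IsRiccatiSolution A B Q R P)
    (hA : A ≠ 0) (hR : 0 < R) (hP0 : 0 ≤ P) : riccatiGain A B R P = B * (P - Q) / (A * R) := by
  have hD : R + B ^ 2 * P ≠ 0 := by positivity
  unfold IsRiccatiSolution at hP
  rw [riccatiGain, div_eq_div_iff hD (by positivity)]
  linear_combination (-B) * hP

end Riccati

theorem scalar_riccati_minimum (A B Q R : ℝ) (hB : B ≠ 0) (hA : A ≠ 0)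
    (hQ : 0 < Q) (hR : 0 < R) :
    let P : ℝ → ℝ := fun K => (Q + K ^ 2 * R) / (1 - (A - B * K) ^ 2)
    let Khat : ℝ := (-R + A ^ 2 * R - B ^ 2 * Q +
      Real.sqrt ((R - A ^ 2 * R + B ^ 2 * Q) ^ 2 + 4 * A ^ 2 * B ^ 2 * R * Q)) / (2 * A * B * R)
    let Ptilde : ℝ := (A ^ 2 * R - R + Q * B ^ 2 +
      Real.sqrt ((R - A ^ 2 * R - Q * B ^ 2) ^ 2 + 4 * B ^ 2 * Q * R)) / (2 * B ^ 2)
    |A - B * Khat| < 1 ∧ P Khat = Ptilde ∧ ∀ K : ℝ, |A - B * K| < 1 → Ptilde ≤ P K := by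
  intro P Khat Ptilde
  have hPtilde : Ptilde = (-(R - A ^ 2 * R - Q * B ^ 2) +
      √((R - A ^ 2 * R - Q * B ^ 2) ^ 2 + 4 * B ^ 2 * (Q * R))) / (2 * B ^ 2) := by
    rw [← mul_assoc]
    ring
  have hpos : 0 < Ptilde := hPtilde ▸ quadratic_pos_root_pos (by positivity) (by positivity)
  have hroot : IsRiccatiSolution A B Q R Ptilde := by
    have hd : 0 ≤ (R - A ^ 2 * R - Q * B ^ 2) ^ 2 + 4 * B ^ 2 * (Q * R) := by positivity
    have := quadratic_pos_root_isRoot (pow_ne_zero 2 hB) hd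
    rw [← hPtilde] at this
    unfold IsRiccatiSolution
    linear_combination this
  have hKhat : Khat = riccatiGain A B R Ptilde := by
    have hdisc : (R - A ^ 2 * R + B ^ 2 * Q) ^ 2 + 4 * A ^ 2 * B ^ 2 * R * Q
        = (R - A ^ 2 * R - Q * B ^ 2) ^ 2 + 4 * B ^ 2 * Q * R := by ring
    rw [hroot.riccatiGain_eq hA hR hpos.le]
    simp only [Khat, Ptilde]
    rw [hdisc]
    field_simp
    ring
  rw [hKhat]
  exact ⟨hroot.abs_sub_mul_gain_lt_one hQ hR hpos, hroot.div_one_sub_sq_gain_eq hQ hR hpos,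
    fun K hK => hroot.le_div_one_sub_sq hR hpos.le hK⟩
end
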